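/- arXiv:1802.05801 — 2 statements merged into one kernel-verified Lean document; each statement's English description precedes it below -/
import Mathlib

section
/- (Bounding the strength of the regression) Let (X₁, Y₁), …, (X_n, Y_n) be random vectors in ℝ^p × ℝ with finite second moments, set Σ_n := (1/n) Σ_{i=1}^n E[X_i X_iᵀ] and Γ_n := (1/n) Σ_{i=1}^n E[X_i Y_i], and suppose Λ(k; Σ_n) > 0. Then S_{2,k}(Σ_n, Γ_n) ≤ ( (1/(n Λ(k; Σ_n))) Σ_{i=1}^n E[Y_i²] )^{1/2} and S_{1,k}(Σ_n, Γ_n) ≤ ( (k/(n Λ(k; Σ_n))) Σ_{i=1}^n E[Y_i²] )^{1/2}. -/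
/-!
Fix a model `M` with `|M| ≤ k` and extend `β = β_M(Σ_n, Γ_n)` by zero to a `k`-sparse `θ ∈ ℝ^p`.
The normal equations `Σ_n(M) β = Γ_n(M)` give `θᵀΣ_nθ = θᵀΓ_n`, and averaging the pointwise
inequality `2 (θᵀX_i) Y_i ≤ (θᵀX_i)² + Y_i²` gives `2 θᵀΓ_n ≤ n⁻¹ ∑ E[Y_i²] + θᵀΣ_nθ`. Hence
`Λ(k; Σ_n) ‖β‖₂² ≤ θᵀΣ_nθ ≤ n⁻¹ ∑ E[Y_i²]`. Positivity of `Λ(k; Σ_n)` also makes `Σ_n(M)`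
invertible, so `β_M` is not a junk value. The `ℓ₁` bound follows from `‖β‖₁ ≤ √k ‖β‖₂`.
-/

open scoped BigOperators
open MeasureTheory ProbabilityTheory Real Matrix

noncomputable section

/-- The Euclidean (`ℓ₂`) norm of a finitely indexed real vector. -/
def norm2 {ι : Type*} [Fintype ι] (v : ι → ℝ) : ℝ := Real.sqrt (∑ i, (v i) ^ 2)

/-- The `ℓ₁` norm of a finitely indexed real vector. -/
def norm1 {ι : Type*} [Fintype ι] (v : ι → ℝ) : ℝ := ∑ i, |v i|

/-- The `ℓ₂ → ℓ₂` operator norm of a square real matrix. -/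
def opNorm {ι : Type*} [Fintype ι] (A : Matrix ι ι ℝ) : ℝ :=
  sSup {r | ∃ x : ι → ℝ, norm2 x ≤ 1 ∧ r = norm2 (A.mulVec x)}

/-- The collection of models: nonempty subsets of `{1, …, p}` of cardinality at most `k`. -/
def Models (p k : ℕ) : Set (Finset (Fin p)) := {M | 1 ≤ M.card ∧ M.card ≤ k}

/-- The subvector of `v` with indices in the model `M`. -/
def subv {p : ℕ} (v : Fin p → ℝ) (M : Finset (Fin p)) : {x // x ∈ M} → ℝ := fun i => v i.1

/-- The submatrix of `A` with row and column indices in the model `M`. -/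
def subm {p : ℕ} (A : Matrix (Fin p) (Fin p) ℝ) (M : Finset (Fin p)) :
    Matrix {x // x ∈ M} {x // x ∈ M} ℝ := fun i j => A i.1 j.1

/-- `RIP(k, A)`: the maximal `k`-sparse operator norm `sup_{M ∈ 𝓜(k)} ‖A(M)‖_op`. -/
def RIP {p : ℕ} (k : ℕ) (A : Matrix (Fin p) (Fin p) ℝ) : ℝ :=
  ⨆ M : Models p k, opNorm (subm A M.1)

/-- `𝒟(k, v) = sup_{M ∈ 𝓜(k)} ‖v(M)‖₂`. -/
def Dnorm {p : ℕ} (k : ℕ) (v : Fin p → ℝ) : ℝ :=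
  ⨆ M : Models p k, norm2 (subv v M.1)

/-- `θ` has at most `k` nonzero coordinates. -/
def sparse {p : ℕ} (k : ℕ) (θ : Fin p → ℝ) : Prop := Set.ncard {j | θ j ≠ 0} ≤ k

/-- The minimal `k`-sparse eigenvalue
`Λ(k; A) = inf{θᵀAθ/‖θ‖₂² : θ ≠ 0, θ k-sparse}`. -/
def Lam {p : ℕ} (k : ℕ) (A : Matrix (Fin p) (Fin p) ℝ) : ℝ :=
  sInf {r | ∃ θ : Fin p → ℝ, θ ≠ 0 ∧ sparse k θ ∧ r = θ ⬝ᵥ A.mulVec θ / norm2 θ ^ 2}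

/-- The linear regression map `β_M(Σ, Γ) = (Σ(M))⁻¹ Γ(M)`. -/
def betaM {p : ℕ} (M : Finset (Fin p)) (S : Matrix (Fin p) (Fin p) ℝ) (G : Fin p → ℝ) :
    {x // x ∈ M} → ℝ := (subm S M)⁻¹.mulVec (subv G M)

/-- `S_{2,k}(Σ, Γ) = sup_{M ∈ 𝓜(k)} ‖β_M(Σ, Γ)‖₂`. -/
def S2k {p : ℕ} (k : ℕ) (S : Matrix (Fin p) (Fin p) ℝ) (G : Fin p → ℝ) : ℝ :=
  ⨆ M : Models p k, norm2 (betaM M.1 S G)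

/-- `S_{1,k}(Σ, Γ) = sup_{M ∈ 𝓜(k)} ‖β_M(Σ, Γ)‖₁`. -/
def S1k {p : ℕ} (k : ℕ) (S : Matrix (Fin p) (Fin p) ℝ) (G : Fin p → ℝ) : ℝ :=
  ⨆ M : Models p k, norm1 (betaM M.1 S G)

/-- The `k`-sparse Euclidean unit ball `Θ_k ⊆ ℝ^p`. -/
def Theta (p k : ℕ) : Set (Fin p → ℝ) := {θ | sparse k θ ∧ norm2 θ ≤ 1}

/-- The elementwise maximum norm `|||A|||_∞` of a matrix. -/
def normInfMat {p : ℕ} (A : Matrix (Fin p) (Fin p) ℝ) : ℝ :=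
  ⨆ q : Fin p × Fin p, |A q.1 q.2|

/-- The supremum norm `‖v‖_∞` of a vector. -/
def normInfVec {p : ℕ} (v : Fin p → ℝ) : ℝ := ⨆ j, |v j|

lemma norm2_pos {ι : Type*} [Fintype ι] {v : ι → ℝ} (hv : v ≠ 0) : 0 < norm2 v := by
  obtain ⟨i, hi⟩ := Function.ne_iff.1 hv
  exact Real.sqrt_pos.2 <|
    Finset.sum_pos' (fun j _ => sq_nonneg _) ⟨i, Finset.mem_univ i, sq_pos_iff.2 hi⟩

lemma norm1_sq_le_card_mul_norm2_sq {ι : Type*} [Fintype ι] (v : ι → ℝ) :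
    norm1 v ^ 2 ≤ Fintype.card ι * norm2 v ^ 2 := by
  rw [norm2, Real.sq_sqrt (Finset.sum_nonneg fun i _ => sq_nonneg _)]
  simpa [norm1] using sq_sum_le_card_mul_sum_sq (s := Finset.univ) (f := fun i => |v i|)

section ExtendZero

variable {p k : ℕ} {M : Finset (Fin p)}

def extendZero (M : Finset (Fin p)) (x : {j // j ∈ M} → ℝ) : Fin p → ℝ :=
  fun j => if h : j ∈ M then x ⟨j, h⟩ else 0

@[simp]
lemma extendZero_coe (x : {j // j ∈ M} → ℝ) (j : {j // j ∈ M}) : extendZero M x j = x j := by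
  simp [extendZero]

lemma sum_extendZero_mul (x : {j // j ∈ M} → ℝ) (g : Fin p → ℝ) :
    ∑ j, extendZero M x j * g j = ∑ j : {j // j ∈ M}, x j * g j := by
  rw [← Finset.sum_subset M.subset_univ fun j _ hj => by simp [extendZero, hj],
    ← Finset.sum_coe_sort M]
  simp

lemma extendZero_ne_zero {x : {j // j ∈ M} → ℝ} (hx : x ≠ 0) : extendZero M x ≠ 0 := by
  contrapose! hx
  ext j
  simpa using congrFun hx j

lemma sparse_extendZero (hM : M.card ≤ k) (x : {j // j ∈ M} → ℝ) :
    sparse k (extendZero M x) := by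
  refine (Set.ncard_le_ncard (fun j hj => ?_) M.finite_toSet).trans
    ((Set.ncard_coe_finset M).trans_le hM)
  by_contra hjM
  exact hj (dif_neg hjM)

lemma norm2_extendZero (x : {j // j ∈ M} → ℝ) : norm2 (extendZero M x) = norm2 x := by
  simp only [norm2, sq, sum_extendZero_mul, extendZero_coe]

lemma extendZero_dotProduct (x : {j // j ∈ M} → ℝ) (G : Fin p → ℝ) :
    extendZero M x ⬝ᵥ G = x ⬝ᵥ subv G M :=
  sum_extendZero_mul x G

lemma extendZero_dotProduct_mulVec (x : {j // j ∈ M} → ℝ) (A : Matrix (Fin p) (Fin p) ℝ) :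
    extendZero M x ⬝ᵥ A *ᵥ extendZero M x = x ⬝ᵥ subm A M *ᵥ x := by
  rw [extendZero_dotProduct]
  congr 1
  ext i
  simp only [subv, mulVec, dotProduct, subm]
  simp_rw [mul_comm (A i.1 _), sum_extendZero_mul]

end ExtendZero

section RegressionStrength

variable {p k : ℕ} {A : Matrix (Fin p) (Fin p) ℝ} {G : Fin p → ℝ} {M : Finset (Fin p)}

lemma Lam_mul_norm2_sq_le {θ : Fin p → ℝ} (hLam : 0 < Lam k A) (hθ : θ ≠ 0) (hs : sparse k θ) :
    Lam k A * norm2 θ ^ 2 ≤ θ ⬝ᵥ A *ᵥ θ := by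
  -- `sInf` of a set that is not bounded below is the junk value `0`
  have hbdd : BddBelow {r | ∃ θ : Fin p → ℝ, θ ≠ 0 ∧ sparse k θ ∧
      r = θ ⬝ᵥ A *ᵥ θ / norm2 θ ^ 2} := by
    by_contra h
    exact hLam.ne' (Real.sInf_of_not_bddBelow h)
  rw [← le_div_iff₀ (pow_pos (norm2_pos hθ) 2)]
  exact csInf_le hbdd ⟨θ, hθ, hs, rfl⟩

lemma isUnit_subm (hLam : 0 < Lam k A) (hM : M.card ≤ k) : IsUnit (subm A M) := by
  refine Matrix.mulVec_injective_iff_isUnit.1 <|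
    (injective_iff_map_eq_zero (subm A M).mulVecLin).2 fun x hx => ?_
  by_contra hx0
  have h := Lam_mul_norm2_sq_le hLam (extendZero_ne_zero hx0) (sparse_extendZero hM x)
  rw [extendZero_dotProduct_mulVec, show subm A M *ᵥ x = 0 from hx, dotProduct_zero] at h
  exact (not_le.2 (mul_pos hLam (pow_pos (norm2_pos (extendZero_ne_zero hx0)) 2))) h

lemma subm_mulVec_betaM (h : IsUnit (subm A M)) : subm A M *ᵥ betaM M A G = subv G M := by
  rw [betaM, mulVec_mulVec, mul_nonsing_inv _ ((isUnit_iff_isUnit_det _).1 h), one_mulVec]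

theorem Lam_mul_norm2_betaM_sq_le {c : ℝ} (hLam : 0 < Lam k A)
    (hbasic : ∀ θ, 2 * (θ ⬝ᵥ G) ≤ c + θ ⬝ᵥ A *ᵥ θ) (hM : M.card ≤ k) :
    Lam k A * norm2 (betaM M A G) ^ 2 ≤ c := by
  set θ := extendZero M (betaM M A G)
  have hnormal : θ ⬝ᵥ A *ᵥ θ = θ ⬝ᵥ G := by
    rw [extendZero_dotProduct_mulVec, extendZero_dotProduct,
      subm_mulVec_betaM (isUnit_subm hLam hM)]
  by_cases hβ : betaM M A G = 0
  · have hc : 0 ≤ c := by simpa using hbasic 0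
    simpa [hβ, norm2] using hc
  · calc Lam k A * norm2 (betaM M A G) ^ 2 = Lam k A * norm2 θ ^ 2 := by
          rw [norm2_extendZero]
      _ ≤ θ ⬝ᵥ A *ᵥ θ := Lam_mul_norm2_sq_le hLam (extendZero_ne_zero hβ) (sparse_extendZero hM _)
      _ ≤ c := by linarith [hbasic θ]

theorem S2k_le_sqrt {c : ℝ} (hLam : 0 < Lam k A)
    (hbasic : ∀ θ, 2 * (θ ⬝ᵥ G) ≤ c + θ ⬝ᵥ A *ᵥ θ) :
    S2k k A G ≤ Real.sqrt (c / Lam k A) := by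
  refine Real.iSup_le (fun M => Real.le_sqrt_of_sq_le ?_) (Real.sqrt_nonneg _)
  rw [le_div_iff₀ hLam, mul_comm]
  exact Lam_mul_norm2_betaM_sq_le hLam hbasic M.2.2

theorem S1k_le_sqrt {c : ℝ} (hLam : 0 < Lam k A)
    (hbasic : ∀ θ, 2 * (θ ⬝ᵥ G) ≤ c + θ ⬝ᵥ A *ᵥ θ) :
    S1k k A G ≤ Real.sqrt (k * c / Lam k A) := by
  refine Real.iSup_le (fun M => Real.le_sqrt_of_sq_le ?_) (Real.sqrt_nonneg _)
  have hcard : ((M.1.card : ℕ) : ℝ) ≤ k := Nat.cast_le.2 M.2.2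
  have hβ := Lam_mul_norm2_betaM_sq_le hLam hbasic M.2.2
  calc norm1 (betaM M.1 A G) ^ 2 ≤ M.1.card * norm2 (betaM M.1 A G) ^ 2 := by
        simpa using norm1_sq_le_card_mul_norm2_sq (betaM M.1 A G)
    _ ≤ k * (c / Lam k A) := by
        gcongr
        rwa [le_div_iff₀ hLam, mul_comm]
    _ = k * c / Lam k A := mul_div_assoc' ..

end RegressionStrength

section Moments

variable {Ω ι : Type*} [MeasurableSpace Ω] {μ : Measure Ω} [Fintype ι] {n : ℕ}

def avgSecondMoment (μ : Measure Ω) (X : Fin n → Ω → ι → ℝ) : Matrix ι ι ℝ :=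
  Matrix.of fun j l => (n : ℝ)⁻¹ * ∑ i, ∫ ω, X i ω j * X i ω l ∂μ

def avgCrossMoment (μ : Measure Ω) (X : Fin n → Ω → ι → ℝ) (Z : Fin n → Ω → ℝ) : ι → ℝ :=
  fun j => (n : ℝ)⁻¹ * ∑ i, ∫ ω, X i ω j * Z i ω ∂μ

lemma integrable_dotProduct_mul {F : Ω → ι → ℝ} {Z : Ω → ℝ}
    (hFZ : ∀ j, Integrable (fun ω => F ω j * Z ω) μ) (θ : ι → ℝ) :
    Integrable (fun ω => (θ ⬝ᵥ F ω) * Z ω) μ := by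
  simp_rw [dotProduct, Finset.sum_mul, mul_assoc]
  exact integrable_finsetSum _ fun j _ => (hFZ j).const_mul _

lemma integral_dotProduct_mul {F : Ω → ι → ℝ} {Z : Ω → ℝ}
    (hFZ : ∀ j, Integrable (fun ω => F ω j * Z ω) μ) (θ : ι → ℝ) :
    ∫ ω, (θ ⬝ᵥ F ω) * Z ω ∂μ = θ ⬝ᵥ fun j => ∫ ω, F ω j * Z ω ∂μ := by
  simp_rw [dotProduct, Finset.sum_mul, mul_assoc]
  rw [integral_finsetSum _ fun j _ => (hFZ j).const_mul _]
  simp_rw [integral_const_mul]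

lemma dotProduct_avgCrossMoment {X : Fin n → Ω → ι → ℝ} {Z : Fin n → Ω → ℝ}
    (hXZ : ∀ i j, Integrable (fun ω => X i ω j * Z i ω) μ) (θ : ι → ℝ) :
    θ ⬝ᵥ avgCrossMoment μ X Z = (n : ℝ)⁻¹ * ∑ i, ∫ ω, (θ ⬝ᵥ X i ω) * Z i ω ∂μ := by
  simp_rw [integral_dotProduct_mul (hXZ _), dotProduct, avgCrossMoment, Finset.mul_sum]
  rw [Finset.sum_comm]
  simp_rw [mul_left_comm]

lemma avgSecondMoment_mulVec {X : Fin n → Ω → ι → ℝ}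
    (hXX : ∀ i j l, Integrable (fun ω => X i ω j * X i ω l) μ) (θ : ι → ℝ) :
    avgSecondMoment μ X *ᵥ θ = avgCrossMoment μ X fun i ω => θ ⬝ᵥ X i ω := by
  ext j
  simp only [avgSecondMoment, avgCrossMoment, mulVec, Matrix.of_apply]
  simp_rw [mul_comm (X _ _ j), integral_dotProduct_mul (hXX _ · j)]
  simp only [dotProduct, Finset.mul_sum, Finset.sum_mul]
  rw [Finset.sum_comm]
  exact Finset.sum_congr rfl fun i _ => Finset.sum_congr rfl fun l _ => by ring

lemma two_mul_integral_mul_le {f g : Ω → ℝ} (hfg : Integrable (fun ω => f ω * g ω) μ)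
    (hf : Integrable (fun ω => f ω ^ 2) μ) (hg : Integrable (fun ω => g ω ^ 2) μ) :
    2 * ∫ ω, f ω * g ω ∂μ ≤ ∫ ω, f ω ^ 2 ∂μ + ∫ ω, g ω ^ 2 ∂μ := by
  rw [← integral_const_mul, ← integral_add hf hg]
  refine integral_mono (hfg.const_mul 2) (hf.add hg) fun ω => ?_
  simpa only [mul_assoc] using two_mul_le_add_sq (f ω) (g ω)

lemma two_mul_dotProduct_avgCrossMoment_le {X : Fin n → Ω → ι → ℝ} {Y : Fin n → Ω → ℝ}
    (hXX : ∀ i j l, Integrable (fun ω => X i ω j * X i ω l) μ)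
    (hXY : ∀ i j, Integrable (fun ω => X i ω j * Y i ω) μ)
    (hYY : ∀ i, Integrable (fun ω => (Y i ω) ^ 2) μ) (θ : ι → ℝ) :
    2 * (θ ⬝ᵥ avgCrossMoment μ X Y) ≤
      (n : ℝ)⁻¹ * ∑ i, ∫ ω, (Y i ω) ^ 2 ∂μ + θ ⬝ᵥ avgSecondMoment μ X *ᵥ θ := by
  have hXθX : ∀ i j, Integrable (fun ω => X i ω j * (θ ⬝ᵥ X i ω)) μ := fun i j => by
    simpa only [mul_comm] using integrable_dotProduct_mul (hXX i · j) θ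
  rw [avgSecondMoment_mulVec hXX, dotProduct_avgCrossMoment hXY,
    dotProduct_avgCrossMoment hXθX, ← mul_add, ← Finset.sum_add_distrib, mul_left_comm,
    Finset.mul_sum]
  gcongr with i
  rw [add_comm]
  simp_rw [← sq]
  exact two_mul_integral_mul_le (integrable_dotProduct_mul (hXY i) θ)
    (by simpa only [sq] using integrable_dotProduct_mul (hXθX i) θ) (hYY i)

end Moments

theorem stmt4_general {Ω : Type} [MeasurableSpace Ω] (μ : Measure Ω)
    {n p : ℕ} (k : ℕ)
    (X : Fin n → Ω → (Fin p → ℝ)) (Y : Fin n → Ω → ℝ)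
    (hXX : ∀ i j l, Integrable (fun ω => X i ω j * X i ω l) μ)
    (hXY : ∀ i j, Integrable (fun ω => X i ω j * Y i ω) μ)
    (hYY : ∀ i, Integrable (fun ω => (Y i ω) ^ 2) μ)
    (Sn : Matrix (Fin p) (Fin p) ℝ)
    (hSn : Sn = Matrix.of fun j l => (n : ℝ)⁻¹ * ∑ i, ∫ ω, X i ω j * X i ω l ∂μ)
    (Gn : Fin p → ℝ)
    (hGn : Gn = fun j => (n : ℝ)⁻¹ * ∑ i, ∫ ω, X i ω j * Y i ω ∂μ)
    (hLam : 0 < Lam k Sn) :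
    S2k k Sn Gn ≤
        Real.sqrt (((n : ℝ) * Lam k Sn)⁻¹ * ∑ i, ∫ ω, (Y i ω) ^ 2 ∂μ) ∧
      S1k k Sn Gn ≤
        Real.sqrt ((k : ℝ) * ((n : ℝ) * Lam k Sn)⁻¹ * ∑ i, ∫ ω, (Y i ω) ^ 2 ∂μ) := by
  obtain rfl : Sn = avgSecondMoment μ X := hSn
  obtain rfl : Gn = avgCrossMoment μ X Y := hGn
  have hbasic := two_mul_dotProduct_avgCrossMoment_le hXX hXY hYY
  constructor
  · convert S2k_le_sqrt hLam hbasic using 2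
    ring
  · convert S1k_le_sqrt hLam hbasic using 2
    ring

/-- Bounding the strength of the regression: with
`Σ_n = (1/n)∑ᵢ 𝔼[XᵢXᵢᵀ]`, `Γ_n = (1/n)∑ᵢ 𝔼[XᵢYᵢ]` and `Λ(k; Σ_n) > 0`, one has
`S_{2,k}(Σ_n, Γ_n) ≤ ((1/(nΛ(k;Σ_n))) ∑ᵢ 𝔼[Yᵢ²])^{1/2}` and
`S_{1,k}(Σ_n, Γ_n) ≤ ((k/(nΛ(k;Σ_n))) ∑ᵢ 𝔼[Yᵢ²])^{1/2}`. -/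
theorem stmt4 {Ω : Type} [MeasurableSpace Ω] (μ : Measure Ω) (hμ : IsProbabilityMeasure μ)
    {n p : ℕ} (hn : 0 < n) (k : ℕ) (hk : 1 ≤ k)
    (X : Fin n → Ω → (Fin p → ℝ)) (Y : Fin n → Ω → ℝ)
    (hXmeas : ∀ i, Measurable (X i)) (hYmeas : ∀ i, Measurable (Y i))
    (hXX : ∀ i j l, Integrable (fun ω => X i ω j * X i ω l) μ)
    (hXY : ∀ i j, Integrable (fun ω => X i ω j * Y i ω) μ)
    (hYY : ∀ i, Integrable (fun ω => (Y i ω) ^ 2) μ)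
    (Sn : Matrix (Fin p) (Fin p) ℝ)
    (hSn : Sn = Matrix.of fun j l => (n : ℝ)⁻¹ * ∑ i, ∫ ω, X i ω j * X i ω l ∂μ)
    (Gn : Fin p → ℝ)
    (hGn : Gn = fun j => (n : ℝ)⁻¹ * ∑ i, ∫ ω, X i ω j * Y i ω ∂μ)
    (hLam : 0 < Lam k Sn) :
    S2k k Sn Gn ≤
        Real.sqrt (((n : ℝ) * Lam k Sn)⁻¹ * ∑ i, ∫ ω, (Y i ω) ^ 2 ∂μ) ∧
      S1k k Sn Gn ≤
        Real.sqrt ((k : ℝ) * ((n : ℝ) * Lam k Sn)⁻¹ * ∑ i, ∫ ω, (Y i ω) ^ 2 ∂μ) :=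
  stmt4_general μ k X Y hXX hXY hYY Sn hSn Gn hGn hLam
end
end

section
/- (Matching lower bound for the linear representation error) Let Σ₁, Σ₂ ∈ ℝ^{p×p} be symmetric with Λ(k; Σ₂) > 0 and RIP(k, Σ₁ − Σ₂) < Λ(k; Σ₂), and let Γ₁, Γ₂ ∈ ℝ^p. Then for any M ∈ 𝓜(k), ‖β_M(Σ₁, Γ₁) − β_M(Σ₂, Γ₂) − [Σ₂(M)]^{-1}(Γ₁(M) − Σ₁(M) β_M(Σ₂, Γ₂))‖₂ = ‖[Σ₂(M)]^{-1}(Σ₁(M) − Σ₂(M))(β_M(Σ₁, Γ₁) − β_M(Σ₂, Γ₂))‖₂ ≥ C_*(k, Σ₂) · Λ(k; Σ₁ − Σ₂) · ‖β_M(Σ₁, Γ₁) − β_M(Σ₂, Γ₂)‖₂, where C_*(k, Σ₂) := min_{M∈𝓜(k)} λ_min([Σ₂(M)]^{-1}) = [RIP(k, Σ₂)]^{-1}. -/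
open scoped BigOperators
open MeasureTheory ProbabilityTheory Real Matrix

noncomputable section

/-- The minimum eigenvalue of a symmetric matrix, as the infimum of the Rayleigh quotient. -/
def lamMin {ι : Type*} [Fintype ι] (A : Matrix ι ι ℝ) : ℝ :=
  sInf {r | ∃ x : ι → ℝ, x ≠ 0 ∧ r = x ⬝ᵥ A.mulVec x / norm2 x ^ 2}

/-- `C_*(k, Σ₂) := min_{M∈𝓜(k)} λ_min((Σ₂(M))⁻¹)`. -/
def Cstar {p : ℕ} (k : ℕ) (S : Matrix (Fin p) (Fin p) ℝ) : ℝ :=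
  sInf {r | ∃ M ∈ Models p k, r = lamMin ((subm S M)⁻¹)}

/-!
On a model `M`, once `Σ₁(M)` and `Σ₂(M)` are invertible, the linear representation error equals
`-Σ₂(M)⁻¹ (Σ₁(M) - Σ₂(M)) (β_M(Σ₁,Γ₁) - β_M(Σ₂,Γ₂))` by pure algebra; `Σ₁(M)` is invertible since
its Rayleigh quotients are at least `Λ(k; Σ₂) - RIP(k, Σ₁ - Σ₂) > 0`. The lower bound combines
`‖D v‖ ≥ Λ(k; D) ‖v‖` (Cauchy–Schwarz on the sparse Rayleigh quotient) with `‖B⁻¹ w‖ ≥ ‖w‖ / ‖B‖_op`.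
For positive definite `B` the eigenvalues of `B⁻¹` are the reciprocals of those of `B`, so
`λ_min(B⁻¹) = ‖B‖_op⁻¹`, and minimising over models gives `C_*(k, Σ₂) = RIP(k, Σ₂)⁻¹`.
-/

open scoped RealInnerProductSpace
open WithLp (toLp)

section Euclidean

variable {ι : Type*} [Fintype ι]

lemma norm2_eq_norm_toLp (x : ι → ℝ) : norm2 x = ‖toLp 2 x‖ := by
  simp [norm2, EuclideanSpace.norm_eq]

lemma norm2_eq_sqrt_dotProduct (x : ι → ℝ) : norm2 x = √(x ⬝ᵥ x) := by
  simp [norm2, dotProduct, sq]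

lemma norm2_sq (x : ι → ℝ) : norm2 x ^ 2 = x ⬝ᵥ x := by
  rw [norm2_eq_sqrt_dotProduct, Real.sq_sqrt (by simpa using dotProduct_self_star_nonneg x)]

lemma norm2_smul (c : ℝ) (x : ι → ℝ) : norm2 (c • x) = |c| * norm2 x := by
  simp [norm2_eq_norm_toLp, norm_smul]

lemma norm2_nonneg (x : ι → ℝ) : 0 ≤ norm2 x := Real.sqrt_nonneg _

lemma norm2_pos_s8 {x : ι → ℝ} (hx : x ≠ 0) : 0 < norm2 x := by
  simpa [norm2_eq_norm_toLp] using hx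

lemma norm2_neg (x : ι → ℝ) : norm2 (-x) = norm2 x := by
  simp [norm2]

lemma norm2_zero : norm2 (0 : ι → ℝ) = 0 := by
  simp [norm2]

lemma dotProduct_eq_inner (x y : ι → ℝ) : x ⬝ᵥ y = ⟪toLp 2 x, toLp 2 y⟫ := by
  simp [EuclideanSpace.inner_toLp_toLp, dotProduct_comm]

lemma abs_dotProduct_le (x y : ι → ℝ) : |x ⬝ᵥ y| ≤ norm2 x * norm2 y := by
  rw [dotProduct_eq_inner, norm2_eq_norm_toLp, norm2_eq_norm_toLp]
  exact abs_real_inner_le_norm _ _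

lemma opNorm_eq_norm_toEuclideanCLM [DecidableEq ι] (A : Matrix ι ι ℝ) :
    opNorm A = ‖toEuclideanCLM (𝕜 := ℝ) A‖ := by
  rw [← ContinuousLinearMap.sSup_unitClosedBall_eq_norm, opNorm]
  congr 1
  ext r
  simp only [Set.mem_ofPred_eq, Set.mem_image, Metric.mem_closedBall, dist_zero_right,
    norm2_eq_norm_toLp, eq_comm (a := r)]
  exact (WithLp.equiv 2 (ι → ℝ)).symm.exists_congr_left

lemma opNorm_nonneg (A : Matrix ι ι ℝ) : 0 ≤ opNorm A := by
  classical
  exact opNorm_eq_norm_toEuclideanCLM A ▸ norm_nonneg _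

lemma norm2_mulVec_le (A : Matrix ι ι ℝ) (x : ι → ℝ) : norm2 (A *ᵥ x) ≤ opNorm A * norm2 x := by
  classical
  simpa [norm2_eq_norm_toLp, opNorm_eq_norm_toEuclideanCLM] using
    (toEuclideanCLM (𝕜 := ℝ) A).le_opNorm (toLp 2 x)

lemma abs_dotProduct_mulVec_le (A : Matrix ι ι ℝ) (x : ι → ℝ) :
    |x ⬝ᵥ A *ᵥ x| ≤ opNorm A * norm2 x ^ 2 :=
  calc |x ⬝ᵥ A *ᵥ x| ≤ norm2 x * norm2 (A *ᵥ x) := abs_dotProduct_le _ _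
    _ ≤ norm2 x * (opNorm A * norm2 x) := by gcongr; exacts [norm2_nonneg x, norm2_mulVec_le A x]
    _ = opNorm A * norm2 x ^ 2 := by ring

lemma mul_norm2_le_norm2_mulVec {A : Matrix ι ι ℝ} {x : ι → ℝ} {c : ℝ}
    (h : c * norm2 x ^ 2 ≤ x ⬝ᵥ A *ᵥ x) : c * norm2 x ≤ norm2 (A *ᵥ x) := by
  rcases (norm2_nonneg x).eq_or_lt with hx | hx
  · rw [← hx, mul_zero]; exact norm2_nonneg _
  · refine le_of_mul_le_mul_left ?_ hx
    calc norm2 x * (c * norm2 x) = c * norm2 x ^ 2 := by ring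
      _ ≤ |x ⬝ᵥ A *ᵥ x| := h.trans (le_abs_self _)
      _ ≤ norm2 x * norm2 (A *ᵥ x) := abs_dotProduct_le _ _

lemma norm2_le_opNorm_mul_norm2_inv_mulVec [DecidableEq ι] {A : Matrix ι ι ℝ}
    (hA : IsUnit A.det) (w : ι → ℝ) : norm2 w ≤ opNorm A * norm2 (A⁻¹ *ᵥ w) := by
  simpa [mulVec_mulVec, mul_nonsing_inv A hA] using norm2_mulVec_le A (A⁻¹ *ᵥ w)

lemma inv_opNorm_mul_norm2_le_norm2_inv_mulVec [DecidableEq ι] {A : Matrix ι ι ℝ}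
    (hA : IsUnit A.det) (w : ι → ℝ) : (opNorm A)⁻¹ * norm2 w ≤ norm2 (A⁻¹ *ᵥ w) := by
  rcases (opNorm_nonneg A).eq_or_lt with h | h
  · rw [← h, _root_.inv_zero, zero_mul]; exact norm2_nonneg _
  · rw [inv_mul_le_iff₀ h]; exact norm2_le_opNorm_mul_norm2_inv_mulVec hA w

lemma opNorm_pos [DecidableEq ι] [Nonempty ι] {A : Matrix ι ι ℝ} (hA : IsUnit A.det) :
    0 < opNorm A := by
  have hw : 0 < norm2 (fun _ : ι => (1 : ℝ)) :=
    norm2_pos_s8 (Function.ne_iff.2 ⟨Classical.arbitrary ι, one_ne_zero⟩)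
  exact pos_of_mul_pos_left (hw.trans_le (norm2_le_opNorm_mul_norm2_inv_mulVec hA _))
    (norm2_nonneg _)

lemma isUnit_det_of_dotProduct_mulVec_pos [DecidableEq ι] {A : Matrix ι ι ℝ}
    (hA : ∀ x ≠ 0, 0 < x ⬝ᵥ A *ᵥ x) : IsUnit A.det := by
  refine isUnit_iff_ne_zero.2 fun hdet => ?_
  obtain ⟨x, hx, hAx⟩ := exists_mulVec_eq_zero_iff.2 hdet
  simpa [hAx] using hA x hx

end Euclidean

section Eigenbasis

variable {ι : Type*} [Fintype ι] {B : Matrix ι ι ℝ}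
  {b : OrthonormalBasis ι ℝ (EuclideanSpace ℝ ι)} {ν : ι → ℝ}

lemma norm2_sq_eq_sum_repr (b : OrthonormalBasis ι ℝ (EuclideanSpace ℝ ι)) (x : ι → ℝ) :
    norm2 x ^ 2 = ∑ j, b.repr (toLp 2 x) j ^ 2 := by
  rw [norm2_eq_norm_toLp, ← b.repr.norm_map, EuclideanSpace.norm_sq_eq]
  simp

lemma repr_mulVec_of_eigenbasis (hB : B.IsSymm) (hb : ∀ j, B *ᵥ b j = ν j • b j)
    (x : ι → ℝ) (j : ι) : b.repr (toLp 2 (B *ᵥ x)) j = ν j * b.repr (toLp 2 x) j := by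
  simp only [OrthonormalBasis.repr_apply_apply, EuclideanSpace.inner_eq_star_dotProduct,
    star_trivial]
  rw [dotProduct_comm, dotProduct_mulVec, ← mulVec_transpose, hB.eq, hb j,
    smul_dotProduct, dotProduct_comm, smul_eq_mul]

lemma dotProduct_mulVec_eq_sum_repr (hB : B.IsSymm) (hb : ∀ j, B *ᵥ b j = ν j • b j)
    (x : ι → ℝ) : x ⬝ᵥ B *ᵥ x = ∑ j, ν j * b.repr (toLp 2 x) j ^ 2 := by
  rw [dotProduct_eq_inner, ← b.repr.inner_map_map, EuclideanSpace.inner_eq_star_dotProduct]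
  simp only [star_trivial, dotProduct, repr_mulVec_of_eigenbasis hB hb]
  exact Finset.sum_congr rfl fun j _ => by ring

lemma norm2_mulVec_le_of_eigenbasis (hB : B.IsSymm) (hb : ∀ j, B *ᵥ b j = ν j • b j)
    {c : ℝ} (hc0 : 0 ≤ c) (hc : ∀ j, |ν j| ≤ c) (x : ι → ℝ) : norm2 (B *ᵥ x) ≤ c * norm2 x := by
  rw [← pow_le_pow_iff_left₀ (norm2_nonneg _) (mul_nonneg hc0 (norm2_nonneg x)) two_ne_zero,
    mul_pow, norm2_sq_eq_sum_repr b, norm2_sq_eq_sum_repr b, Finset.mul_sum]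
  refine Finset.sum_le_sum fun j _ => ?_
  rw [repr_mulVec_of_eigenbasis hB hb, mul_pow]
  exact mul_le_mul_of_nonneg_right (sq_le_sq.2 ((hc j).trans (le_abs_self c))) (sq_nonneg _)

lemma lamMin_eq_of_eigenbasis (hB : B.IsSymm) (hb : ∀ j, B *ᵥ b j = ν j • b j) {j₀ : ι}
    (hj₀ : ∀ j, ν j₀ ≤ ν j) : lamMin B = ν j₀ := by
  have hn : norm2 (b j₀ : ι → ℝ) = 1 := by simp [norm2_eq_norm_toLp, b.norm_eq_one]
  refine IsLeast.csInf_eq ⟨⟨b j₀, fun h => by simp [h, norm2_zero] at hn, ?_⟩, ?_⟩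
  · rw [hb, dotProduct_smul, ← norm2_sq, hn]
    simp
  · rintro r ⟨x, hx, rfl⟩
    rw [le_div_iff₀ (pow_pos (norm2_pos_s8 hx) 2), dotProduct_mulVec_eq_sum_repr hB hb,
      norm2_sq_eq_sum_repr b, Finset.mul_sum]
    exact Finset.sum_le_sum fun j _ => by gcongr; exact hj₀ j

lemma opNorm_eq_of_eigenbasis [DecidableEq ι] (hB : B.IsSymm) (hb : ∀ j, B *ᵥ b j = ν j • b j)
    {j₀ : ι} (hj₀ : ∀ j, |ν j| ≤ |ν j₀|) : opNorm B = |ν j₀| := by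
  have hn : norm2 (b j₀ : ι → ℝ) = 1 := by simp [norm2_eq_norm_toLp, b.norm_eq_one]
  refine le_antisymm ?_ ?_
  · rw [opNorm_eq_norm_toEuclideanCLM]
    refine ContinuousLinearMap.opNorm_le_bound _ (abs_nonneg _) fun v => ?_
    have := norm2_mulVec_le_of_eigenbasis hB hb (abs_nonneg _) hj₀ v.ofLp
    rwa [norm2_eq_norm_toLp, norm2_eq_norm_toLp, ← toEuclideanCLM_toLp,
      WithLp.toLp_ofLp] at this
  · calc |ν j₀| = norm2 (B *ᵥ b j₀) := by rw [hb, norm2_smul, hn, mul_one]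
      _ ≤ opNorm B * norm2 (b j₀ : ι → ℝ) := norm2_mulVec_le B _
      _ = opNorm B := by rw [hn, mul_one]

end Eigenbasis

lemma Matrix.inv_mulVec_eq_inv_smul {K ι : Type*} [Field K] [Fintype ι] [DecidableEq ι]
    {A : Matrix ι ι K} (hA : IsUnit A.det) {μ : K} (hμ : μ ≠ 0) {v : ι → K}
    (hv : A *ᵥ v = μ • v) : A⁻¹ *ᵥ v = μ⁻¹ • v :=
  calc A⁻¹ *ᵥ v = μ⁻¹ • A⁻¹ *ᵥ (μ • v) := by
        rw [mulVec_smul, smul_smul, inv_mul_cancel₀ hμ, one_smul]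
    _ = μ⁻¹ • v := by rw [← hv, mulVec_mulVec, nonsing_inv_mul _ hA, one_mulVec]

lemma Matrix.PosDef.lamMin_inv_eq_inv_opNorm {ι : Type*} [Fintype ι] [DecidableEq ι] [Nonempty ι]
    {B : Matrix ι ι ℝ} (hB : B.PosDef) : lamMin B⁻¹ = (opNorm B)⁻¹ := by
  set hH := hB.isHermitian
  have hpos := hB.eigenvalues_pos
  have hb := hH.mulVec_eigenvectorBasis
  obtain ⟨j₀, hj₀⟩ := Finite.exists_max hH.eigenvalues
  have habs : ∀ j, |hH.eigenvalues j| = hH.eigenvalues j := fun j => abs_of_pos (hpos j)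
  have hop : opNorm B = hH.eigenvalues j₀ := by
    simpa only [habs] using
      opNorm_eq_of_eigenbasis (isHermitian_iff_isSymm.1 hH) hb (by simpa only [habs] using hj₀)
  have hb_inv : ∀ j, B⁻¹ *ᵥ hH.eigenvectorBasis j =
      (hH.eigenvalues j)⁻¹ • hH.eigenvectorBasis j := fun j =>
    inv_mulVec_eq_inv_smul ((isUnit_iff_isUnit_det B).1 hB.isUnit) (hpos j).ne' (hb j)
  rw [hop, lamMin_eq_of_eigenbasis (isHermitian_iff_isSymm.1 hB.inv.isHermitian) hb_inv
    fun j => inv_anti₀ (hpos j) (hj₀ j)]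

lemma Matrix.inv_mulVec_sub_inv_mulVec_sub_eq_neg {R ι : Type*} [CommRing R] [Fintype ι]
    [DecidableEq ι] {A B : Matrix ι ι R} (hA : IsUnit A.det) (hB : IsUnit B.det) (g₁ g₂ : ι → R) :
    A⁻¹ *ᵥ g₁ - B⁻¹ *ᵥ g₂ - B⁻¹ *ᵥ (g₁ - A *ᵥ (B⁻¹ *ᵥ g₂)) =
      -(B⁻¹ *ᵥ ((A - B) *ᵥ (A⁻¹ *ᵥ g₁ - B⁻¹ *ᵥ g₂))) := by
  have hAA : A *ᵥ (A⁻¹ *ᵥ g₁) = g₁ := by rw [mulVec_mulVec, mul_nonsing_inv A hA, one_mulVec]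
  have hBB : ∀ v, B⁻¹ *ᵥ (B *ᵥ v) = v := fun v => by
    rw [mulVec_mulVec, nonsing_inv_mul B hB, one_mulVec]
  simp only [sub_mulVec, mulVec_sub, hAA, hBB]
  abel

section Extension

variable {ι : Type*} [Fintype ι] {s : Finset ι}

lemma extend_dotProduct (x : s → ℝ) (y : ι → ℝ) :
    Subtype.val.extend x 0 ⬝ᵥ y = x ⬝ᵥ fun i => y i := by
  rw [dotProduct, ← Finset.sum_subset (Finset.subset_univ s), ← Finset.sum_coe_sort s]
  · exact Finset.sum_congr rfl fun i _ => by rw [Subtype.val_injective.extend_apply]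
  · intro a _ ha
    rw [Function.extend_apply' _ _ _ (by simpa using ha), Pi.zero_apply, zero_mul]

lemma extend_dotProduct_mulVec_extend (S : Matrix ι ι ℝ) (x : s → ℝ) :
    Subtype.val.extend x 0 ⬝ᵥ S *ᵥ Subtype.val.extend x 0 =
      x ⬝ᵥ S.submatrix Subtype.val Subtype.val *ᵥ x := by
  rw [extend_dotProduct]
  congr 1
  funext i
  rw [mulVec, dotProduct_comm, extend_dotProduct, dotProduct_comm]
  rfl

lemma norm2_extend (x : s → ℝ) : norm2 (Subtype.val.extend x 0) = norm2 x := by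
  rw [norm2_eq_sqrt_dotProduct, norm2_eq_sqrt_dotProduct, extend_dotProduct]
  simp only [Subtype.val_injective.extend_apply]

lemma sparse_extend {p k : ℕ} {s : Finset (Fin p)} (hs : s.card ≤ k) (x : s → ℝ) :
    sparse k (Subtype.val.extend x 0) := by
  have hsupp : {j | Subtype.val.extend x 0 j ≠ 0} ⊆ (s : Set (Fin p)) := fun j hj => by
    by_contra hjs
    exact hj (Function.extend_apply' _ _ _ (by simpa using hjs))
  exact (Set.ncard_le_ncard hsupp s.finite_toSet).trans (by rwa [Set.ncard_coe_finset])

end Extension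

section Sparse

variable {p k : ℕ}

lemma Lam_mul_norm2_sq_le_s8 (S : Matrix (Fin p) (Fin p) ℝ) {M : Finset (Fin p)} (hM : M.card ≤ k)
    (x : M → ℝ) : Lam k S * norm2 x ^ 2 ≤ x ⬝ᵥ subm S M *ᵥ x := by
  rcases eq_or_ne x 0 with rfl | hx
  · simp [norm2_zero]
  have hx2 : 0 < norm2 x ^ 2 := pow_pos (norm2_pos_s8 hx) 2
  have hbdd : BddBelow {r | ∃ θ : Fin p → ℝ, θ ≠ 0 ∧ sparse k θ ∧
      r = θ ⬝ᵥ S *ᵥ θ / norm2 θ ^ 2} := by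
    refine ⟨-opNorm S, ?_⟩
    rintro r ⟨θ, hθ, -, rfl⟩
    rw [le_div_iff₀ (pow_pos (norm2_pos_s8 hθ) 2)]
    linarith [neg_abs_le (θ ⬝ᵥ S *ᵥ θ), abs_dotProduct_mulVec_le S θ]
  rw [← le_div_iff₀ hx2]
  refine csInf_le hbdd ⟨Subtype.val.extend x 0, fun h => hx ?_, sparse_extend hM x, ?_⟩
  · simpa [h, norm2_zero, (norm2_pos_s8 hx).ne] using norm2_extend x
  · rw [extend_dotProduct_mulVec_extend, norm2_extend]
    rfl

lemma opNorm_subm_le_RIP (A : Matrix (Fin p) (Fin p) ℝ) {M : Finset (Fin p)}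
    (hM : M ∈ Models p k) : opNorm (subm A M) ≤ RIP k A :=
  le_ciSup (f := fun N : Models p k => opNorm (subm A N)) (Set.finite_range _).bddAbove ⟨M, hM⟩

lemma RIP_nonneg (k : ℕ) (A : Matrix (Fin p) (Fin p) ℝ) : 0 ≤ RIP k A :=
  Real.iSup_nonneg fun _ => opNorm_nonneg _

lemma posDef_subm {S : Matrix (Fin p) (Fin p) ℝ} (hS : S.IsSymm) (hLam : 0 < Lam k S)
    {M : Finset (Fin p)} (hM : M.card ≤ k) : (subm S M).PosDef :=
  PosDef.of_dotProduct_mulVec_pos (isHermitian_iff_isSymm.2 (hS.submatrix _)) fun x hx => by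
    simpa using (mul_pos hLam (pow_pos (norm2_pos_s8 hx) 2)).trans_le (Lam_mul_norm2_sq_le_s8 S hM x)

lemma isUnit_det_subm_of_RIP_sub_lt_Lam {S₁ S₂ : Matrix (Fin p) (Fin p) ℝ}
    (hRIP : RIP k (S₁ - S₂) < Lam k S₂) {M : Finset (Fin p)} (hM : M ∈ Models p k) :
    IsUnit (subm S₁ M).det := by
  refine isUnit_det_of_dotProduct_mulVec_pos fun x hx => ?_
  have hsplit : x ⬝ᵥ subm S₁ M *ᵥ x = x ⬝ᵥ subm S₂ M *ᵥ x + x ⬝ᵥ subm (S₁ - S₂) M *ᵥ x := by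
    rw [← dotProduct_add, ← add_mulVec]
    congr 2
    ext i j
    simp [subm]
  have hD := opNorm_subm_le_RIP (S₁ - S₂) hM
  calc 0 < (Lam k S₂ - RIP k (S₁ - S₂)) * norm2 x ^ 2 :=
        mul_pos (sub_pos.2 hRIP) (pow_pos (norm2_pos_s8 hx) 2)
    _ ≤ (Lam k S₂ - opNorm (subm (S₁ - S₂) M)) * norm2 x ^ 2 := by gcongr
    _ ≤ x ⬝ᵥ subm S₁ M *ᵥ x := by
        rw [hsplit]
        linarith [Lam_mul_norm2_sq_le_s8 S₂ hM.2 x, abs_dotProduct_mulVec_le (subm (S₁ - S₂) M) x,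
          neg_abs_le (x ⬝ᵥ subm (S₁ - S₂) M *ᵥ x)]

lemma Cstar_eq_inv_RIP {S : Matrix (Fin p) (Fin p) ℝ} (hS : S.IsSymm) (hLam : 0 < Lam k S) :
    Cstar k S = (RIP k S)⁻¹ := by
  rcases isEmpty_or_nonempty (Models p k) with hempty | hne
  · have : {r | ∃ M ∈ Models p k, r = lamMin (subm S M)⁻¹} = ∅ :=
      Set.eq_empty_of_forall_notMem fun r ⟨M, hM, _⟩ => hempty.false ⟨M, hM⟩
    simp [Cstar, RIP, this]
  set g : Models p k → ℝ := fun N => opNorm (subm S N)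
  have hg : ∀ N : Models p k, lamMin (subm S N)⁻¹ = (g N)⁻¹ ∧ 0 < g N := fun N => by
    have := (Finset.card_pos.1 N.2.1).coe_sort
    have hpd := posDef_subm hS hLam N.2.2
    exact ⟨hpd.lamMin_inv_eq_inv_opNorm, opNorm_pos ((isUnit_iff_isUnit_det _).1 hpd.isUnit)⟩
  obtain ⟨N₀, hN₀⟩ := Finite.exists_max g
  have hRIP : RIP k S = g N₀ :=
    le_antisymm (ciSup_le hN₀) (le_ciSup (Set.finite_range g).bddAbove N₀)
  rw [hRIP]
  refine IsLeast.csInf_eq ⟨⟨N₀, N₀.2, (hg N₀).1.symm⟩, ?_⟩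
  rintro r ⟨M, hM, rfl⟩
  rw [(hg (⟨M, hM⟩ : Models p k)).1]
  exact inv_anti₀ (hg _).2 (hN₀ _)

end Sparse

theorem stmt8_general {p : ℕ} (k : ℕ)
    (Sig1 Sig2 : Matrix (Fin p) (Fin p) ℝ) (hS2 : Sig2.IsSymm)
    (G1 G2 : Fin p → ℝ)
    (hLam : 0 < Lam k Sig2)
    (hRIP : RIP k (Sig1 - Sig2) < Lam k Sig2) :
    Cstar k Sig2 = (RIP k Sig2)⁻¹ ∧
    ∀ M ∈ Models p k,
      norm2 (betaM M Sig1 G1 - betaM M Sig2 G2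
          - (subm Sig2 M)⁻¹.mulVec
              (subv G1 M - (subm Sig1 M).mulVec (betaM M Sig2 G2))) =
        norm2 ((subm Sig2 M)⁻¹.mulVec
          ((subm Sig1 M - subm Sig2 M).mulVec (betaM M Sig1 G1 - betaM M Sig2 G2))) ∧
      Cstar k Sig2 * Lam k (Sig1 - Sig2) * norm2 (betaM M Sig1 G1 - betaM M Sig2 G2) ≤
        norm2 (betaM M Sig1 G1 - betaM M Sig2 G2
          - (subm Sig2 M)⁻¹.mulVec
              (subv G1 M - (subm Sig1 M).mulVec (betaM M Sig2 G2))) := by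
  have hC : Cstar k Sig2 = (RIP k Sig2)⁻¹ := Cstar_eq_inv_RIP hS2 hLam
  refine ⟨hC, fun M hM => ?_⟩
  have : Nonempty M := (Finset.card_pos.1 hM.1).coe_sort
  have hB := (isUnit_iff_isUnit_det _).1 (posDef_subm hS2 hLam hM.2).isUnit
  have hA := isUnit_det_subm_of_RIP_sub_lt_Lam hRIP hM
  have hC_nonneg : 0 ≤ Cstar k Sig2 := hC ▸ inv_nonneg.2 (RIP_nonneg k Sig2)
  have hC_le : Cstar k Sig2 ≤ (opNorm (subm Sig2 M))⁻¹ :=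
    hC ▸ inv_anti₀ (opNorm_pos hB) (opNorm_subm_le_RIP Sig2 hM)
  unfold betaM
  rw [inv_mulVec_sub_inv_mulVec_sub_eq_neg hA hB, norm2_neg]
  set v := (subm Sig1 M)⁻¹ *ᵥ subv G1 M - (subm Sig2 M)⁻¹ *ᵥ subv G2 M
  refine ⟨rfl, ?_⟩
  calc Cstar k Sig2 * Lam k (Sig1 - Sig2) * norm2 v
      ≤ Cstar k Sig2 * norm2 ((subm Sig1 M - subm Sig2 M) *ᵥ v) := by
        rw [mul_assoc]
        exact mul_le_mul_of_nonneg_left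
          (mul_norm2_le_norm2_mulVec (Lam_mul_norm2_sq_le_s8 _ hM.2 v)) hC_nonneg
    _ ≤ (opNorm (subm Sig2 M))⁻¹ * norm2 ((subm Sig1 M - subm Sig2 M) *ᵥ v) :=
        mul_le_mul_of_nonneg_right hC_le (norm2_nonneg _)
    _ ≤ norm2 ((subm Sig2 M)⁻¹ *ᵥ (subm Sig1 M - subm Sig2 M) *ᵥ v) :=
        inv_opNorm_mul_norm2_le_norm2_inv_mulVec hB _

/-- Matching lower bound for the linear representation error:
`C_*(k, Σ₂) = (RIP(k, Σ₂))⁻¹` and for any `M ∈ 𝓜(k)` the linear representation error equals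
`‖(Σ₂(M))⁻¹(Σ₁(M) − Σ₂(M))(β_M(Σ₁,Γ₁) − β_M(Σ₂,Γ₂))‖₂`, which is at least
`C_*(k,Σ₂) Λ(k; Σ₁ − Σ₂) ‖β_M(Σ₁,Γ₁) − β_M(Σ₂,Γ₂)‖₂`. -/
theorem stmt8 {p : ℕ} (k : ℕ) (hk : 1 ≤ k)
    (Sig1 Sig2 : Matrix (Fin p) (Fin p) ℝ) (hS1 : Sig1.IsSymm) (hS2 : Sig2.IsSymm)
    (G1 G2 : Fin p → ℝ)
    (hLam : 0 < Lam k Sig2)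
    (hRIP : RIP k (Sig1 - Sig2) < Lam k Sig2) :
    Cstar k Sig2 = (RIP k Sig2)⁻¹ ∧
    ∀ M ∈ Models p k,
      norm2 (betaM M Sig1 G1 - betaM M Sig2 G2
          - (subm Sig2 M)⁻¹.mulVec
              (subv G1 M - (subm Sig1 M).mulVec (betaM M Sig2 G2))) =
        norm2 ((subm Sig2 M)⁻¹.mulVec
          ((subm Sig1 M - subm Sig2 M).mulVec (betaM M Sig1 G1 - betaM M Sig2 G2))) ∧
      Cstar k Sig2 * Lam k (Sig1 - Sig2) * norm2 (betaM M Sig1 G1 - betaM M Sig2 G2) ≤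
        norm2 (betaM M Sig1 G1 - betaM M Sig2 G2
          - (subm Sig2 M)⁻¹.mulVec
              (subv G1 M - (subm Sig1 M).mulVec (betaM M Sig2 G2))) :=
  stmt8_general k Sig1 Sig2 hS2 G1 G2 hLam hRIP
end
end
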